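/- arXiv:2310.12993 — 2 statements merged into one kernel-verified Lean document; each statement's English description precedes it below -/
import Mathlib

section
/- Let α > 0. If there exists an integer k ≥ 2 such that G_{k,α}(y) ≥ 0 for all y ∈ [0, 1], then for every real number x ∈ [0, 1/2], the inequality (1 + 4x²)^{1/α}·cos(πx) ≥ 1 − 4x² holds. -/
/-! By Euler's product for the sine, `sin (2πx) / (2 sin (πx)) = cos (πx)` is the limit of
the odd-index partial products `∏_{j<n} (1 - 4x²/(2j+1)²) = (1 - 4x²) F_n(4x²)`.
For `0 ≤ y ≤ 4`, passing from `n` to `n + 1` multiplies `F_n` by `1 - y/(2n+1)²`, and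
nonnegativity of `G` survives because `(1 + y/(4n-2)) (1 - y/(2n+1)²) ≥ 1 + y/(4n+2)`.
Hence `G_{n,α}(4x²) ≥ 0` for all large `n`, which gives
`(1 + 4x²)^{1/α} (1 - 4x²) F_n(4x²) ≥ 1 - 4x²`; let `n → ∞`. -/

open Real

noncomputable def F (n : ℕ) (y : ℝ) : ℝ :=
  ∏ k ∈ Finset.Icc 2 n, (1 - y/(2*(k:ℝ)-1)^2)

noncomputable def G (n : ℕ) (α y : ℝ) : ℝ :=
  (1 + y) ^ (1/α) * F n y - (1 + y/(4*(n:ℝ)-2))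

open Filter Topology

noncomputable def cosPartialProd (n : ℕ) (y : ℝ) : ℝ :=
  ∏ j ∈ Finset.range n, (1 - y / (2 * (j : ℝ) + 1) ^ 2)

lemma F_succ {n : ℕ} (hn : 1 ≤ n) (y : ℝ) :
    F (n + 1) y = F n y * (1 - y / (2 * (n : ℝ) + 1) ^ 2) := by
  rw [F, F, Finset.prod_Icc_succ_top (by omega : 2 ≤ n + 1)]
  push_cast
  ring_nf

lemma cosPartialProd_eq_one_sub_mul_F {n : ℕ} (hn : 1 ≤ n) (y : ℝ) :
    cosPartialProd n y = (1 - y) * F n y := by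
  induction n, hn using Nat.le_induction with
  | base => simp [cosPartialProd, F]
  | succ m hm ih =>
    rw [cosPartialProd, Finset.prod_range_succ, ← cosPartialProd, ih, F_succ hm]
    ring

lemma one_add_div_le_mul_one_sub_div {N y : ℝ} (hN : 1 ≤ N) (hy0 : 0 ≤ y) (hy4 : y ≤ 4) :
    1 + y / (4 * N + 2) ≤ (1 + y / (4 * N - 2)) * (1 - y / (2 * N + 1) ^ 2) := by
  have hdiff : (1 + y / (4 * N - 2)) * (1 - y / (2 * N + 1) ^ 2) - (1 + y / (4 * N + 2))
      = y * (4 - y) / ((4 * N - 2) * (2 * N + 1) ^ 2) := by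
    have : 4 * N - 2 ≠ 0 := by linarith
    field_simp
    ring
  have : 0 ≤ y * (4 - y) / ((4 * N - 2) * (2 * N + 1) ^ 2) :=
    div_nonneg (by nlinarith) (mul_nonneg (by linarith) (sq_nonneg _))
  linarith

lemma G_succ_nonneg {n : ℕ} {α y : ℝ} (hn : 1 ≤ n) (hy0 : 0 ≤ y) (hy4 : y ≤ 4)
    (h : 0 ≤ G n α y) : 0 ≤ G (n + 1) α y := by
  have hN : (1 : ℝ) ≤ n := by exact_mod_cast hn
  have hfactor : 0 ≤ 1 - y / (2 * (n : ℝ) + 1) ^ 2 := by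
    rw [sub_nonneg, div_le_one (by positivity)]
    nlinarith
  rw [G, sub_nonneg] at h ⊢
  push_cast
  calc 1 + y / (4 * ((n : ℝ) + 1) - 2) = 1 + y / (4 * n + 2) := by ring_nf
    _ ≤ (1 + y / (4 * n - 2)) * (1 - y / (2 * n + 1) ^ 2) :=
      one_add_div_le_mul_one_sub_div hN hy0 hy4
    _ ≤ (1 + y) ^ (1 / α) * F n y * (1 - y / (2 * n + 1) ^ 2) :=
      mul_le_mul_of_nonneg_right h hfactor
    _ = (1 + y) ^ (1 / α) * F (n + 1) y := by rw [F_succ hn]; ring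

lemma G_nonneg_of_le {k n : ℕ} {α y : ℝ} (hk : 1 ≤ k) (hkn : k ≤ n) (hy0 : 0 ≤ y)
    (hy4 : y ≤ 4) (h : 0 ≤ G k α y) : 0 ≤ G n α y := by
  induction n, hkn using Nat.le_induction with
  | base => exact h
  | succ m hm ih => exact G_succ_nonneg (hk.trans hm) hy0 hy4 ih

lemma one_sub_le_rpow_mul_cosPartialProd {n : ℕ} {α y : ℝ} (hn : 1 ≤ n) (hy0 : 0 ≤ y)
    (hy1 : y ≤ 1) (h : 0 ≤ G n α y) : 1 - y ≤ (1 + y) ^ (1 / α) * cosPartialProd n y := by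
  have hN : (1 : ℝ) ≤ n := by exact_mod_cast hn
  rw [G, sub_nonneg] at h
  have hone : 1 ≤ 1 + y / (4 * (n : ℝ) - 2) :=
    le_add_of_nonneg_right (div_nonneg hy0 (by linarith))
  calc 1 - y ≤ (1 - y) * ((1 + y) ^ (1 / α) * F n y) :=
        le_mul_of_one_le_right (by linarith) (hone.trans h)
    _ = (1 + y) ^ (1 / α) * cosPartialProd n y := by
      rw [cosPartialProd_eq_one_sub_mul_F hn]; ring

lemma prod_range_two_mul_eq_cosPartialProd_mul (n : ℕ) (x : ℝ) :
    ∏ j ∈ Finset.range (2 * n), (1 - (2 * x) ^ 2 / ((j : ℝ) + 1) ^ 2)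
      = cosPartialProd n (4 * x ^ 2) *
          ∏ j ∈ Finset.range n, (1 - x ^ 2 / ((j : ℝ) + 1) ^ 2) := by
  induction n with
  | zero => simp [cosPartialProd]
  | succ m ih =>
    have heven :
        (2 * x) ^ 2 / (((2 * m + 1 : ℕ) : ℝ) + 1) ^ 2 = x ^ 2 / ((m : ℝ) + 1) ^ 2 := by
      push_cast
      field_simp
      ring
    have hodd :
        (2 * x) ^ 2 / (((2 * m : ℕ) : ℝ) + 1) ^ 2 = 4 * x ^ 2 / (2 * (m : ℝ) + 1) ^ 2 := by
      push_cast
      ring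
    rw [Nat.mul_succ, Finset.prod_range_succ, Finset.prod_range_succ, ih, heven, hodd,
      cosPartialProd, cosPartialProd, Finset.prod_range_succ, Finset.prod_range_succ]
    ring

lemma tendsto_cosPartialProd {x : ℝ} (hx : sin (π * x) ≠ 0) :
    Tendsto (fun n => cosPartialProd n (4 * x ^ 2)) atTop (𝓝 (cos (π * x))) := by
  have hdouble := (tendsto_euler_sin_prod (2 * x)).comp
    (tendsto_id.const_mul_atTop' (by norm_num : 0 < 2))
  have hsingle := (tendsto_euler_sin_prod x).const_mul 2
  have hlimit : sin (π * (2 * x)) / (2 * sin (π * x)) = cos (π * x) := by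
    rw [show π * (2 * x) = 2 * (π * x) by ring, sin_two_mul]
    field_simp
  rw [← hlimit]
  refine (hdouble.div hsingle (mul_ne_zero two_ne_zero hx)).congr' ?_
  filter_upwards [hsingle.eventually_ne (mul_ne_zero two_ne_zero hx)] with n hn
  simp only [Pi.div_apply, Function.comp_apply, id, prod_range_two_mul_eq_cosPartialProd_mul]
  rw [div_eq_iff hn]
  ring

theorem redheffer_from_induction_general (α : ℝ)
    (h : ∃ k : ℕ, 2 ≤ k ∧ ∀ y ∈ Set.Icc (0:ℝ) 1, 0 ≤ G k α y) :
    ∀ x ∈ Set.Icc (0:ℝ) (1/2),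
      (1 + 4*x^2) ^ (1/α) * Real.cos (π * x) ≥ 1 - 4*x^2 := by
  rintro x ⟨hx0, hx1⟩
  obtain ⟨k, hk, hG⟩ := h
  rcases hx0.eq_or_lt with rfl | hx0
  · simp
  rcases hx1.eq_or_lt with rfl | hx1
  · rw [show π * (1 / 2) = π / 2 by ring, cos_pi_div_two]
    norm_num
  have hy0 : 0 ≤ 4 * x ^ 2 := by positivity
  have hy1 : 4 * x ^ 2 ≤ 1 := by nlinarith
  have hsin : sin (π * x) ≠ 0 :=
    (sin_pos_of_pos_of_lt_pi (by positivity) (by nlinarith [pi_pos])).ne'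
  set y := 4 * x ^ 2
  have hbound : ∀ᶠ n in atTop, 1 - y ≤ (1 + y) ^ (1 / α) * cosPartialProd n y := by
    filter_upwards [eventually_ge_atTop k] with n hn
    exact one_sub_le_rpow_mul_cosPartialProd (by omega) hy0 hy1
      (G_nonneg_of_le (by omega) hn hy0 (by linarith) (hG _ ⟨hy0, hy1⟩))
  exact ge_of_tendsto ((tendsto_cosPartialProd hsin).const_mul _) hbound

theorem redheffer_from_induction (α : ℝ) (hα : 0 < α)
    (h : ∃ k : ℕ, 2 ≤ k ∧ ∀ y ∈ Set.Icc (0:ℝ) 1, 0 ≤ G k α y) :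
    ∀ x ∈ Set.Icc (0:ℝ) (1/2),
      (1 + 4*x^2) ^ (1/α) * Real.cos (π * x) ≥ 1 - 4*x^2 :=
  redheffer_from_induction_general α h
end

section
/- Let α > 0 and let n ≥ 2 be an integer. Then (1 + y)^{1/α}·F_n(y) ≥ 1 for all y ∈ [0, 1] if and only if 2^{1/α}·F_n(1) ≥ 1 (equivalently, if and only if α ≤ −log 2 / log F_n(1)). -/
open Real

/-!
Each factor of `F n` is affine in `y`, and Bernoulli's inequality for exponents in `[0, 1]` gives
`(1 - c) ^ y ≤ 1 - y * c`, hence `F n 1 ^ y ≤ F n y`; likewise `2 ^ y ≤ 1 + y`. Therefore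
`(1 + y) ^ (1/α) * F n y ≥ (2 ^ (1/α) * F n 1) ^ y`, so the inequality on `[0, 1]` reduces to its
value at `y = 1`. Taking logarithms (`log F n 1 < 0`) turns that into the bound on `α`.
-/

open Finset

lemma prod_one_sub_rpow_le_prod_one_sub_mul {ι : Type*} (s : Finset ι) {c : ι → ℝ}
    (hc : ∀ i ∈ s, c i ≤ 1) {y : ℝ} (hy0 : 0 ≤ y) (hy1 : y ≤ 1) :
    (∏ i ∈ s, (1 - c i)) ^ y ≤ ∏ i ∈ s, (1 - y * c i) := by
  rw [← Real.finsetProd_rpow s _ (fun i hi => sub_nonneg.2 (hc i hi))]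
  refine prod_le_prod (fun i hi => rpow_nonneg (sub_nonneg.2 (hc i hi)) _) fun i hi => ?_
  simpa [sub_eq_add_neg] using
    rpow_one_add_le_one_add_mul_self (s := -c i) (by linarith [hc i hi]) hy0 hy1

lemma two_rpow_le_one_add {y : ℝ} (hy0 : 0 ≤ y) (hy1 : y ≤ 1) : (2 : ℝ) ^ y ≤ 1 + y := by
  simpa [one_add_one_eq_two] using rpow_one_add_le_one_add_mul_self (s := 1) (by norm_num) hy0 hy1

lemma one_le_two_rpow_mul_iff {α x : ℝ} (hα : 0 < α) (hx0 : 0 < x) (hx1 : x < 1) :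
    1 ≤ (2 : ℝ) ^ (1/α) * x ↔ α ≤ -log 2 / log x := by
  have hlog : log x < 0 := log_neg hx0 hx1
  rw [← log_nonneg_iff (by positivity), log_mul (by positivity) hx0.ne', log_rpow two_pos,
    le_div_iff_of_neg hlog, show 1/α * log 2 + log x = (log 2 + α * log x) / α by field_simp,
    le_div_iff₀ hα, zero_mul]
  constructor <;> intro h <;> linarith

lemma one_div_sq_two_mul_sub_one_lt_one {n k : ℕ} (hk : k ∈ Icc 2 n) :
    1 / (2 * (k : ℝ) - 1) ^ 2 < 1 := by
  have : (2 : ℝ) ≤ k := by exact_mod_cast (mem_Icc.1 hk).1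
  rw [div_lt_one (by nlinarith)]
  nlinarith

lemma F_eq_prod (n : ℕ) (y : ℝ) :
    F n y = ∏ k ∈ Icc 2 n, (1 - y * (1 / (2 * (k : ℝ) - 1) ^ 2)) := by
  simp only [F, mul_one_div]

lemma F_pos {n : ℕ} {y : ℝ} (hy : y ≤ 1) : 0 < F n y := by
  rw [F_eq_prod]
  refine prod_pos fun k hk => ?_
  have h := one_div_sq_two_mul_sub_one_lt_one hk
  have : 0 ≤ 1 / (2 * (k : ℝ) - 1) ^ 2 := by positivity
  nlinarith

lemma F_one_lt_one {n : ℕ} (hn : 2 ≤ n) : F n 1 < 1 := by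
  rw [F_eq_prod]
  refine (prod_lt_prod_of_nonempty (g := fun _ => 1) (fun k hk => ?_) (fun k hk => ?_)
    ⟨2, mem_Icc.2 ⟨le_rfl, hn⟩⟩).trans_eq prod_const_one
  · linarith [one_div_sq_two_mul_sub_one_lt_one hk]
  · have : (2 : ℝ) ≤ k := by exact_mod_cast (mem_Icc.1 hk).1
    have : 0 < 1 / (2 * (k : ℝ) - 1) ^ 2 := one_div_pos.2 (by nlinarith)
    linarith

lemma F_one_rpow_le {n : ℕ} {y : ℝ} (hy0 : 0 ≤ y) (hy1 : y ≤ 1) : F n 1 ^ y ≤ F n y := by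
  simpa only [F_eq_prod, one_mul] using prod_one_sub_rpow_le_prod_one_sub_mul _
    (fun k hk => (one_div_sq_two_mul_sub_one_lt_one hk).le) hy0 hy1

lemma one_le_one_add_rpow_mul_F {α : ℝ} (hα : 0 < α) {n : ℕ}
    (h : 1 ≤ (2 : ℝ) ^ (1/α) * F n 1) {y : ℝ} (hy0 : 0 ≤ y) (hy1 : y ≤ 1) :
    1 ≤ (1 + y) ^ (1/α) * F n y := by
  have hF1 : 0 < F n 1 := F_pos le_rfl
  calc (1 : ℝ) ≤ ((2 : ℝ) ^ (1/α) * F n 1) ^ y := one_le_rpow h hy0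
    _ = ((2 : ℝ) ^ y) ^ (1/α) * F n 1 ^ y := by
      rw [mul_rpow (by positivity) hF1.le, ← rpow_mul zero_le_two, ← rpow_mul zero_le_two,
        mul_comm y]
    _ ≤ (1 + y) ^ (1/α) * F n y := by
      gcongr
      · exact two_rpow_le_one_add hy0 hy1
      · exact F_one_rpow_le hy0 hy1

theorem ge_one_iff (α : ℝ) (hα : 0 < α) (n : ℕ) (hn : 2 ≤ n) :
    ((∀ y ∈ Set.Icc (0:ℝ) 1, (1 + y) ^ (1/α) * F n y ≥ 1) ↔ (2:ℝ) ^ (1/α) * F n 1 ≥ 1) ∧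
    ((∀ y ∈ Set.Icc (0:ℝ) 1, (1 + y) ^ (1/α) * F n y ≥ 1) ↔
      α ≤ -Real.log 2 / Real.log (F n 1)) := by
  have reduce_to_one : (∀ y ∈ Set.Icc (0:ℝ) 1, (1 + y) ^ (1/α) * F n y ≥ 1) ↔
      (2:ℝ) ^ (1/α) * F n 1 ≥ 1 :=
    ⟨fun h => by simpa [one_add_one_eq_two] using h 1 ⟨zero_le_one, le_rfl⟩,
      fun h y hy => one_le_one_add_rpow_mul_F hα h hy.1 hy.2⟩
  exact ⟨reduce_to_one,
    reduce_to_one.trans (one_le_two_rpow_mul_iff hα (F_pos le_rfl) (F_one_lt_one hn))⟩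
end
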